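/- Let A, E ∈ ℝ^{m×n}, let Z, δZ ∈ ℝ^{n×n} be such that V = Z + δZ is orthogonal, and let D ∈ ℝ^{n×n} be diagonal with (A + E)ᵀ(A + E) = V D Vᵀ. Then for every Q ∈ ℝ^{n×n}, ‖off(Qᵀ Aᵀ A Q)‖_F ≤ ‖A‖² ‖Q − Z‖_F (‖Q − Z‖_F + 2‖Z‖) + √n · ( ‖A‖² (2‖Z‖ + ‖δZ‖) ‖δZ‖ + (2‖A‖ + ‖E‖) ‖E‖ ). -/
import Mathlib

open Matrix

noncomputable def specNorm {m n : ℕ} (A : Matrix (Fin m) (Fin n) ℝ) : ℝ :=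
  ‖LinearMap.toContinuousLinearMap (Matrix.toEuclideanLin A)‖

noncomputable def frobNorm {m n : ℕ} (A : Matrix (Fin m) (Fin n) ℝ) : ℝ :=
  Real.sqrt (∑ p, ∑ q, (A p q) ^ 2)

def offDiag {n : ℕ} (A : Matrix (Fin n) (Fin n) ℝ) : Matrix (Fin n) (Fin n) ℝ :=
  fun p q => if p = q then 0 else A p q

def jacobiRot {n : ℕ} (i j : Fin n) (c s : ℝ) : Matrix (Fin n) (Fin n) ℝ :=
  fun p q =>
    if p = i ∧ q = i then c
    else if p = j ∧ q = j then c
    else if p = i ∧ q = j then s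
    else if p = j ∧ q = i then -s
    else if p = q then 1 else 0

open Classical in
noncomputable def eigValsDesc {n : ℕ} (A : Matrix (Fin n) (Fin n) ℝ) : Fin n → ℝ :=
  if hA : A.IsHermitian then
    fun k => (hA.eigenvalues ∘ Tuple.sort hA.eigenvalues) k.rev
  else 0

noncomputable def singValsDesc {m n : ℕ} (A : Matrix (Fin m) (Fin n) ℝ) : Fin n → ℝ :=
  fun k => Real.sqrt (eigValsDesc (Aᵀ * A) k)

section SpecLemmas
open scoped Matrix.Norms.L2Operator

lemma specNorm_eq {m n : ℕ} (A : Matrix (Fin m) (Fin n) ℝ) : specNorm A = ‖A‖ := rfl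

lemma specNorm_nonneg {m n : ℕ} (A : Matrix (Fin m) (Fin n) ℝ) : 0 ≤ specNorm A := by
  rw [specNorm_eq]; exact norm_nonneg A

lemma specNorm_mul {m n k : ℕ} (A : Matrix (Fin m) (Fin n) ℝ) (B : Matrix (Fin n) (Fin k) ℝ) :
    specNorm (A * B) ≤ specNorm A * specNorm B := by
  simp only [specNorm_eq]; exact Matrix.l2_opNorm_mul A B

lemma specNorm_transpose {m n : ℕ} (A : Matrix (Fin m) (Fin n) ℝ) : specNorm Aᵀ = specNorm A := by
  simp only [specNorm_eq]
  rw [← Matrix.conjTranspose_eq_transpose_of_trivial]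
  exact Matrix.l2_opNorm_conjTranspose A

lemma specNorm_add_le {m n : ℕ} (A B : Matrix (Fin m) (Fin n) ℝ) :
    specNorm (A + B) ≤ specNorm A + specNorm B := by
  simp only [specNorm_eq]; exact norm_add_le A B

lemma specNorm_neg {m n : ℕ} (A : Matrix (Fin m) (Fin n) ℝ) : specNorm (-A) = specNorm A := by
  simp only [specNorm_eq]; exact norm_neg A

lemma specNorm_mulVec {m n : ℕ} (A : Matrix (Fin m) (Fin n) ℝ) (x : EuclideanSpace ℝ (Fin n)) :
    ‖(EuclideanSpace.equiv (Fin m) ℝ).symm (A *ᵥ x)‖ ≤ specNorm A * ‖x‖ := by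
  rw [specNorm_eq]; exact Matrix.l2_opNorm_mulVec A x

lemma specNorm_orth_le_one {n : ℕ} (V : Matrix (Fin n) (Fin n) ℝ) (h : Vᵀ * V = 1) :
    specNorm V ≤ 1 := by
  have h1 : specNorm (1 : Matrix (Fin n) (Fin n) ℝ) * specNorm (1 : Matrix (Fin n) (Fin n) ℝ)
      = specNorm (1 : Matrix (Fin n) (Fin n) ℝ) := by
    simp only [specNorm_eq]
    have := Matrix.l2_opNorm_conjTranspose_mul_self (1 : Matrix (Fin n) (Fin n) ℝ)
    simpa using this.symm
  have h1' : specNorm (1 : Matrix (Fin n) (Fin n) ℝ) ≤ 1 := by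
    nlinarith [specNorm_nonneg (1 : Matrix (Fin n) (Fin n) ℝ)]
  have h2 : specNorm V * specNorm V = specNorm (1 : Matrix (Fin n) (Fin n) ℝ) := by
    rw [← h]
    simp only [specNorm_eq]
    rw [← Matrix.conjTranspose_eq_transpose_of_trivial]
    exact (Matrix.l2_opNorm_conjTranspose_mul_self V).symm
  nlinarith [specNorm_nonneg V]

end SpecLemmas

section FrobLemmas
attribute [local instance] Matrix.frobeniusSeminormedAddCommGroup

lemma frobNorm_eq {m n : ℕ} (A : Matrix (Fin m) (Fin n) ℝ) : frobNorm A = ‖A‖ := by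
  rw [Matrix.frobenius_norm_def, frobNorm, Real.sqrt_eq_rpow]
  congr 1
  refine Finset.sum_congr rfl fun p _ => Finset.sum_congr rfl fun q _ => ?_
  rw [Real.rpow_two, Real.norm_eq_abs, sq_abs]

lemma frobNorm_nonneg {m n : ℕ} (A : Matrix (Fin m) (Fin n) ℝ) : 0 ≤ frobNorm A :=
  Real.sqrt_nonneg _

lemma frobNorm_add_le {m n : ℕ} (A B : Matrix (Fin m) (Fin n) ℝ) :
    frobNorm (A + B) ≤ frobNorm A + frobNorm B := by
  simp only [frobNorm_eq]; exact norm_add_le A B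

lemma frobNorm_transpose {m n : ℕ} (A : Matrix (Fin m) (Fin n) ℝ) : frobNorm Aᵀ = frobNorm A := by
  simp only [frobNorm_eq]; exact Matrix.frobenius_norm_transpose A

lemma frobNorm_mul {m n k : ℕ} (A : Matrix (Fin m) (Fin n) ℝ) (B : Matrix (Fin n) (Fin k) ℝ) :
    frobNorm (A * B) ≤ frobNorm A * frobNorm B := by
  simp only [frobNorm_eq]; exact Matrix.frobenius_norm_mul A B

lemma frobNorm_offDiag_le {n : ℕ} (A : Matrix (Fin n) (Fin n) ℝ) :
    frobNorm (offDiag A) ≤ frobNorm A := by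
  apply Real.sqrt_le_sqrt
  apply Finset.sum_le_sum; intro p _
  apply Finset.sum_le_sum; intro q _
  by_cases h : p = q
  · simp [offDiag, h]; positivity
  · simp [offDiag, h]

lemma frobNorm_one {n : ℕ} : frobNorm (1 : Matrix (Fin n) (Fin n) ℝ) = Real.sqrt n := by
  rw [frobNorm]
  congr 1
  have : ∀ p q : Fin n, ((1 : Matrix (Fin n) (Fin n) ℝ) p q) ^ 2 = if p = q then 1 else 0 := by
    intro p q; by_cases h : p = q <;> simp [Matrix.one_apply, h]
  simp only [this, Finset.sum_ite_eq', Finset.mem_univ, if_true]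
  simp

end FrobLemmas

lemma frobNorm_sq_cols {m k : ℕ} (Y : Matrix (Fin m) (Fin k) ℝ) :
    frobNorm Y ^ 2 =
      ∑ q, ‖((EuclideanSpace.equiv (Fin m) ℝ).symm (fun p => Y p q) : EuclideanSpace ℝ (Fin m))‖ ^ 2 := by
  rw [frobNorm, Real.sq_sqrt (by positivity)]
  rw [Finset.sum_comm]
  refine Finset.sum_congr rfl fun q _ => ?_
  rw [EuclideanSpace.norm_eq, Real.sq_sqrt (by positivity)]
  refine Finset.sum_congr rfl fun p _ => ?_
  simp [Real.norm_eq_abs, sq_abs]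

lemma frobNorm_spec_mul {m n k : ℕ} (M : Matrix (Fin m) (Fin n) ℝ) (X : Matrix (Fin n) (Fin k) ℝ) :
    frobNorm (M * X) ≤ specNorm M * frobNorm X := by
  have hsq : frobNorm (M * X) ^ 2 ≤ (specNorm M * frobNorm X) ^ 2 := by
    rw [frobNorm_sq_cols, mul_pow, frobNorm_sq_cols, Finset.mul_sum]
    refine Finset.sum_le_sum fun q _ => ?_
    have hcol : ((EuclideanSpace.equiv (Fin m) ℝ).symm (fun p => (M * X) p q) : EuclideanSpace ℝ (Fin m))
        = (EuclideanSpace.equiv (Fin m) ℝ).symm (M *ᵥ (fun r => X r q)) := rfl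
    rw [hcol, ← mul_pow]
    have h := specNorm_mulVec M ((EuclideanSpace.equiv (Fin n) ℝ).symm (fun r => X r q))
    have : ((EuclideanSpace.equiv (Fin n) ℝ).symm (fun r => X r q) : EuclideanSpace ℝ (Fin n)) = fun r => X r q := rfl
    rw [this] at h
    exact pow_le_pow_left₀ (norm_nonneg _) h 2
  have hrhs : 0 ≤ specNorm M * frobNorm X := mul_nonneg (specNorm_nonneg M) (frobNorm_nonneg X)
  nlinarith [frobNorm_nonneg (M * X)]

lemma frobNorm_mul_spec {m n k : ℕ} (X : Matrix (Fin m) (Fin n) ℝ) (M : Matrix (Fin n) (Fin k) ℝ) :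
    frobNorm (X * M) ≤ frobNorm X * specNorm M := by
  rw [← frobNorm_transpose (X * M), Matrix.transpose_mul]
  calc frobNorm (Mᵀ * Xᵀ) ≤ specNorm Mᵀ * frobNorm Xᵀ := frobNorm_spec_mul _ _
  _ = frobNorm X * specNorm M := by rw [specNorm_transpose, frobNorm_transpose, mul_comm]

lemma frobNorm_le_sqrt_specNorm {n : ℕ} (X : Matrix (Fin n) (Fin n) ℝ) :
    frobNorm X ≤ Real.sqrt n * specNorm X := by
  have h := frobNorm_mul_spec (1 : Matrix (Fin n) (Fin n) ℝ) X
  rwa [one_mul, frobNorm_one] at h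

lemma offDiag_add {n : ℕ} (X Y : Matrix (Fin n) (Fin n) ℝ) :
    offDiag (X + Y) = offDiag X + offDiag Y := by
  ext p q; by_cases h : p = q <;> simp [offDiag, h]

lemma offDiag_sub_diag {n : ℕ} {D : Matrix (Fin n) (Fin n) ℝ} (hD : D.IsDiag)
    (X : Matrix (Fin n) (Fin n) ℝ) : offDiag (X - D) = offDiag X := by
  ext p q
  by_cases h : p = q
  · simp [offDiag, h]
  · simp [offDiag, h, hD h]

/-- Bound on `‖off(Qᵀ Aᵀ A Q)‖_F` for a nearly exact SVD. -/
theorem off_QtAtAQ_bound {m n : ℕ} (A E : Matrix (Fin m) (Fin n) ℝ)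
    (Z δZ : Matrix (Fin n) (Fin n) ℝ)
    (horth : (Z + δZ)ᵀ * (Z + δZ) = 1)
    (D : Matrix (Fin n) (Fin n) ℝ) (hD : D.IsDiag)
    (hfac : (A + E)ᵀ * (A + E) = (Z + δZ) * D * (Z + δZ)ᵀ) :
    ∀ Q : Matrix (Fin n) (Fin n) ℝ,
      frobNorm (offDiag (Qᵀ * Aᵀ * A * Q)) ≤
        specNorm A ^ 2 * frobNorm (Q - Z) * (frobNorm (Q - Z) + 2 * specNorm Z) +
          Real.sqrt n *
            (specNorm A ^ 2 * (2 * specNorm Z + specNorm δZ) * specNorm δZ +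
              (2 * specNorm A + specNorm E) * specNorm E) := by
  intro Q
  set a := specNorm A with ha
  set z := specNorm Z with hz
  set d := specNorm δZ with hd
  set e := specNorm E with he
  set f := frobNorm (Q - Z) with hf
  set B : Matrix (Fin n) (Fin n) ℝ := Aᵀ * A with hB
  set N : Matrix (Fin n) (Fin n) ℝ := Q - Z with hN
  set V : Matrix (Fin n) (Fin n) ℝ := Z + δZ with hV
  -- basic nonnegativity
  have ha0 : 0 ≤ a := specNorm_nonneg A
  have hz0 : 0 ≤ z := specNorm_nonneg Z
  have hd0 : 0 ≤ d := specNorm_nonneg δZ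
  have he0 : 0 ≤ e := specNorm_nonneg E
  have hf0 : 0 ≤ f := frobNorm_nonneg _
  -- spectral norm of B
  have hBa : specNorm B ≤ a * a := by
    calc specNorm (Aᵀ * A) ≤ specNorm Aᵀ * specNorm A := specNorm_mul _ _
    _ = a * a := by rw [specNorm_transpose]
  -- D in terms of V
  have hD_eq : D = Vᵀ * ((A + E)ᵀ * (A + E)) * V := by
    rw [hfac]
    calc D = 1 * D * 1 := by rw [one_mul, mul_one]
    _ = (Vᵀ * V) * D * (Vᵀ * V) := by rw [horth]
    _ = Vᵀ * (V * D * Vᵀ) * V := by simp only [Matrix.mul_assoc]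
  -- main algebraic expansion
  have hexp : Qᵀ * Aᵀ * A * Q - D =
      (Zᵀ * B * Z - D) +
        (Nᵀ * (B * Z) + (Zᵀ * B) * N + Nᵀ * (B * N)) := by
    rw [hN, hB]
    simp only [Matrix.transpose_sub, Matrix.sub_mul, Matrix.mul_sub, Matrix.mul_assoc]
    abel
  -- expansion of Z^T B Z - D
  have hZD : Zᵀ * B * Z - D =
      (-(δZᵀ * (B * Z)) + -((Zᵀ * B) * δZ) + -(δZᵀ * (B * δZ))) +
        Vᵀ * ((B - (A + E)ᵀ * (A + E)) * V) := by
    rw [hD_eq, hB, hV]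
    simp only [Matrix.transpose_add, Matrix.transpose_sub, Matrix.add_mul, Matrix.mul_add,
      Matrix.sub_mul, Matrix.mul_sub, Matrix.mul_assoc]
    abel
  -- bound on B - (A+E)^T (A+E)
  have hBC : specNorm (B - (A + E)ᵀ * (A + E)) ≤ (2 * a + e) * e := by
    have hid : B - (A + E)ᵀ * (A + E) = -(Aᵀ * E) + -(Eᵀ * A) + -(Eᵀ * E) := by
      rw [hB]
      simp only [Matrix.transpose_add, Matrix.add_mul, Matrix.mul_add]
      abel
    rw [hid]
    have h1 : specNorm (Aᵀ * E) ≤ a * e := by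
      calc specNorm (Aᵀ * E) ≤ specNorm Aᵀ * specNorm E := specNorm_mul _ _
      _ = a * e := by rw [specNorm_transpose]
    have h2 : specNorm (Eᵀ * A) ≤ e * a := by
      calc specNorm (Eᵀ * A) ≤ specNorm Eᵀ * specNorm A := specNorm_mul _ _
      _ = e * a := by rw [specNorm_transpose]
    have h3 : specNorm (Eᵀ * E) ≤ e * e := by
      calc specNorm (Eᵀ * E) ≤ specNorm Eᵀ * specNorm E := specNorm_mul _ _
      _ = e * e := by rw [specNorm_transpose]
    calc specNorm (-(Aᵀ * E) + -(Eᵀ * A) + -(Eᵀ * E))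
        ≤ specNorm (-(Aᵀ * E) + -(Eᵀ * A)) + specNorm (-(Eᵀ * E)) := specNorm_add_le _ _
    _ ≤ specNorm (-(Aᵀ * E)) + specNorm (-(Eᵀ * A)) + specNorm (-(Eᵀ * E)) := by
        have := specNorm_add_le (-(Aᵀ * E)) (-(Eᵀ * A)); linarith
    _ = specNorm (Aᵀ * E) + specNorm (Eᵀ * A) + specNorm (Eᵀ * E) := by
        rw [specNorm_neg, specNorm_neg, specNorm_neg]
    _ ≤ a * e + e * a + e * e := by linarith
    _ = (2 * a + e) * e := by ring
  -- ‖V‖ ≤ 1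
  have hV1 : specNorm V ≤ 1 := specNorm_orth_le_one V horth
  have hVt1 : specNorm Vᵀ ≤ 1 := by rw [specNorm_transpose]; exact hV1
  have hV0 : 0 ≤ specNorm V := specNorm_nonneg V
  have hVt0 : 0 ≤ specNorm Vᵀ := specNorm_nonneg Vᵀ
  -- spectral bound on Z^T B Z - D
  have hSZD : specNorm (Zᵀ * B * Z - D) ≤ a ^ 2 * (2 * z + d) * d + (2 * a + e) * e := by
    rw [hZD]
    have h1 : specNorm (δZᵀ * (B * Z)) ≤ d * (a * a * z) := by
      calc specNorm (δZᵀ * (B * Z)) ≤ specNorm δZᵀ * specNorm (B * Z) := specNorm_mul _ _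
      _ ≤ d * (a * a * z) := by
          rw [specNorm_transpose]
          apply mul_le_mul_of_nonneg_left _ hd0
          calc specNorm (B * Z) ≤ specNorm B * specNorm Z := specNorm_mul _ _
          _ ≤ a * a * z := mul_le_mul_of_nonneg_right hBa hz0
    have h2 : specNorm ((Zᵀ * B) * δZ) ≤ z * (a * a) * d := by
      calc specNorm ((Zᵀ * B) * δZ) ≤ specNorm (Zᵀ * B) * specNorm δZ := specNorm_mul _ _
      _ ≤ z * (a * a) * d := by
          apply mul_le_mul_of_nonneg_right _ hd0
          calc specNorm (Zᵀ * B) ≤ specNorm Zᵀ * specNorm B := specNorm_mul _ _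
          _ ≤ z * (a * a) := by
              rw [specNorm_transpose]
              exact mul_le_mul_of_nonneg_left hBa hz0
    have h3 : specNorm (δZᵀ * (B * δZ)) ≤ d * (a * a * d) := by
      calc specNorm (δZᵀ * (B * δZ)) ≤ specNorm δZᵀ * specNorm (B * δZ) := specNorm_mul _ _
      _ ≤ d * (a * a * d) := by
          rw [specNorm_transpose]
          apply mul_le_mul_of_nonneg_left _ hd0
          calc specNorm (B * δZ) ≤ specNorm B * specNorm δZ := specNorm_mul _ _
          _ ≤ a * a * d := mul_le_mul_of_nonneg_right hBa hd0
    have h4 : specNorm (Vᵀ * ((B - (A + E)ᵀ * (A + E)) * V)) ≤ (2 * a + e) * e := by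
      have hBC0 : 0 ≤ specNorm (B - (A + E)ᵀ * (A + E)) := specNorm_nonneg _
      calc specNorm (Vᵀ * ((B - (A + E)ᵀ * (A + E)) * V))
          ≤ specNorm Vᵀ * specNorm ((B - (A + E)ᵀ * (A + E)) * V) := specNorm_mul _ _
      _ ≤ 1 * specNorm ((B - (A + E)ᵀ * (A + E)) * V) :=
          mul_le_mul_of_nonneg_right hVt1 (specNorm_nonneg _)
      _ = specNorm ((B - (A + E)ᵀ * (A + E)) * V) := one_mul _
      _ ≤ specNorm (B - (A + E)ᵀ * (A + E)) * specNorm V := specNorm_mul _ _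
      _ ≤ specNorm (B - (A + E)ᵀ * (A + E)) * 1 := mul_le_mul_of_nonneg_left hV1 hBC0
      _ = specNorm (B - (A + E)ᵀ * (A + E)) := mul_one _
      _ ≤ (2 * a + e) * e := hBC
    have htri : specNorm ((-(δZᵀ * (B * Z)) + -((Zᵀ * B) * δZ) + -(δZᵀ * (B * δZ))) +
        Vᵀ * ((B - (A + E)ᵀ * (A + E)) * V)) ≤
        specNorm (δZᵀ * (B * Z)) + specNorm ((Zᵀ * B) * δZ) + specNorm (δZᵀ * (B * δZ)) +
          specNorm (Vᵀ * ((B - (A + E)ᵀ * (A + E)) * V)) := by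
      have t1 := specNorm_add_le (-(δZᵀ * (B * Z)) + -((Zᵀ * B) * δZ) + -(δZᵀ * (B * δZ)))
        (Vᵀ * ((B - (A + E)ᵀ * (A + E)) * V))
      have t2 := specNorm_add_le (-(δZᵀ * (B * Z)) + -((Zᵀ * B) * δZ)) (-(δZᵀ * (B * δZ)))
      have t3 := specNorm_add_le (-(δZᵀ * (B * Z))) (-((Zᵀ * B) * δZ))
      simp only [specNorm_neg] at t2 t3
      linarith
    calc specNorm _ ≤ _ := htri
    _ ≤ d * (a * a * z) + z * (a * a) * d + d * (a * a * d) + (2 * a + e) * e := by linarith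
    _ = a ^ 2 * (2 * z + d) * d + (2 * a + e) * e := by ring
  -- Frobenius bounds on the cross terms
  have hc1 : frobNorm (Nᵀ * (B * Z)) ≤ f * (a * a * z) := by
    calc frobNorm (Nᵀ * (B * Z)) ≤ frobNorm Nᵀ * specNorm (B * Z) := frobNorm_mul_spec _ _
    _ ≤ f * (a * a * z) := by
        rw [frobNorm_transpose]
        apply mul_le_mul_of_nonneg_left _ hf0
        calc specNorm (B * Z) ≤ specNorm B * specNorm Z := specNorm_mul _ _
        _ ≤ a * a * z := mul_le_mul_of_nonneg_right hBa hz0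
  have hc2 : frobNorm ((Zᵀ * B) * N) ≤ z * (a * a) * f := by
    calc frobNorm ((Zᵀ * B) * N) ≤ specNorm (Zᵀ * B) * frobNorm N := frobNorm_spec_mul _ _
    _ ≤ z * (a * a) * f := by
        apply mul_le_mul_of_nonneg_right _ hf0
        calc specNorm (Zᵀ * B) ≤ specNorm Zᵀ * specNorm B := specNorm_mul _ _
        _ ≤ z * (a * a) := by rw [specNorm_transpose]; exact mul_le_mul_of_nonneg_left hBa hz0
  have hc3 : frobNorm (Nᵀ * (B * N)) ≤ f * (a * a * f) := by
    calc frobNorm (Nᵀ * (B * N)) ≤ frobNorm Nᵀ * frobNorm (B * N) := frobNorm_mul _ _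
    _ ≤ f * (a * a * f) := by
        rw [frobNorm_transpose]
        apply mul_le_mul_of_nonneg_left _ hf0
        calc frobNorm (B * N) ≤ specNorm B * frobNorm N := frobNorm_spec_mul _ _
        _ ≤ a * a * f := mul_le_mul_of_nonneg_right hBa hf0
  -- assemble
  have hoff : offDiag (Qᵀ * Aᵀ * A * Q) =
      offDiag (Zᵀ * B * Z - D) +
        offDiag (Nᵀ * (B * Z) + (Zᵀ * B) * N + Nᵀ * (B * N)) := by
    rw [← offDiag_sub_diag hD (Qᵀ * Aᵀ * A * Q), hexp, offDiag_add]
  have hmain : frobNorm (offDiag (Qᵀ * Aᵀ * A * Q)) ≤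
      frobNorm (Zᵀ * B * Z - D) +
        frobNorm (Nᵀ * (B * Z) + (Zᵀ * B) * N + Nᵀ * (B * N)) := by
    rw [hoff]
    calc frobNorm _ ≤ frobNorm (offDiag (Zᵀ * B * Z - D)) +
        frobNorm (offDiag (Nᵀ * (B * Z) + (Zᵀ * B) * N + Nᵀ * (B * N))) := frobNorm_add_le _ _
    _ ≤ _ := add_le_add (frobNorm_offDiag_le _) (frobNorm_offDiag_le _)
  have hcross : frobNorm (Nᵀ * (B * Z) + (Zᵀ * B) * N + Nᵀ * (B * N)) ≤
      a ^ 2 * f * (f + 2 * z) := by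
    have t1 := frobNorm_add_le (Nᵀ * (B * Z) + (Zᵀ * B) * N) (Nᵀ * (B * N))
    have t2 := frobNorm_add_le (Nᵀ * (B * Z)) ((Zᵀ * B) * N)
    have : a ^ 2 * f * (f + 2 * z) = f * (a * a * z) + z * (a * a) * f + f * (a * a * f) := by
      ring
    linarith
  have hsqn : frobNorm (Zᵀ * B * Z - D) ≤
      Real.sqrt n * (a ^ 2 * (2 * z + d) * d + (2 * a + e) * e) := by
    calc frobNorm (Zᵀ * B * Z - D) ≤ Real.sqrt n * specNorm (Zᵀ * B * Z - D) :=
        frobNorm_le_sqrt_specNorm _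
    _ ≤ Real.sqrt n * (a ^ 2 * (2 * z + d) * d + (2 * a + e) * e) :=
        mul_le_mul_of_nonneg_left hSZD (Real.sqrt_nonneg _)
  calc frobNorm (offDiag (Qᵀ * Aᵀ * A * Q)) ≤ _ := hmain
  _ ≤ Real.sqrt n * (a ^ 2 * (2 * z + d) * d + (2 * a + e) * e) +
      a ^ 2 * f * (f + 2 * z) := add_le_add hsqn hcross
  _ = a ^ 2 * f * (f + 2 * z) +
      Real.sqrt n * (a ^ 2 * (2 * z + d) * d + (2 * a + e) * e) := by ring
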